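/- Let μ be the hardcore distribution with fugacity λ > 0 on a bipartite graph G = (V_L ⊎ V_R, E), let M ≥ 1 and k ≥ 2M be integers, suppose the marginal distribution μ_L on V_L is M-coupling independent, and let V_L = U_1 ⊎ ⋯ ⊎ U_k be any partition of V_L. Then the block dynamics B, which at each step picks S ⊆ [k] with |S| = 2M uniformly at random and resamples the coordinates on U_S ∪ V_R from μ conditioned on the values on V_L∖U_S (where U_S = ⋃_{i∈S} U_i), has relaxation time at most 2^{k−2M}; equivalently, for every f: {−,+}^{V_L ∪ V_R} → ℝ, Var_μ[f] ≤ (2^{k−2M}/C(k,2M)) · Σ_{S ⊆ [k], |S| = 2M} μ[Var_{U_S ∪ V_R}[f]], where C(k,2M) is the binomial coefficient. -/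

import Mathlib

open Finset
open scoped BigOperators Classical

namespace Paper

/-- Configurations: assignments of one of `q` spins to each of `n` vertices. -/
abbrev Config (n q : ℕ) := Fin n → Fin q

/-- A spin system on a graph `G` on vertex set `Fin n` with spin set `Fin q`:
nonnegative external fields and nonnegative symmetric interaction matrices. -/
structure SpinSystem (n q : ℕ) (G : SimpleGraph (Fin n)) where
  b : Fin n → Fin q → ℝ
  A : Fin n → Fin n → Fin q → Fin q → ℝ
  b_nonneg : ∀ v a, 0 ≤ b v a
  A_nonneg : ∀ v w a c, 0 ≤ A v w a c
  A_symm : ∀ v w a c, A v w a c = A w v c a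

variable {n q k : ℕ}

/-- The number of neighbours of `v` (in `G`) lying inside `Λ`. -/
noncomputable def degIn (G : SimpleGraph (Fin n)) (Λ : Finset (Fin n)) (v : Fin n) : ℕ :=
  (Λ.filter fun w => G.Adj v w).card

/-- The maximum degree of `G`. -/
noncomputable def maxDeg (G : SimpleGraph (Fin n)) : ℕ :=
  univ.sup fun v => degIn G univ v

/-- The edges of `G`, listed as ordered pairs `p` with `p.1 < p.2`. -/
noncomputable def edgePairs (G : SimpleGraph (Fin n)) : Finset (Fin n × Fin n) :=
  univ.filter fun p => p.1 < p.2 ∧ G.Adj p.1 p.2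

/-- Conditional Gibbs weight: the free set is `Λ`, and the pinning uses the values
of `τ` outside of `Λ`.  Edges lying entirely outside `Λ` are dropped. -/
noncomputable def condWeight {G : SimpleGraph (Fin n)} (S : SpinSystem n q G)
    (Λ : Finset (Fin n)) (τ σ : Config n q) : ℝ :=
  (if ∀ v, v ∉ Λ → σ v = τ v then (1 : ℝ) else 0)
    * (∏ v ∈ Λ, S.b v (σ v))
    * ∏ p ∈ (edgePairs G).filter (fun p => p.1 ∈ Λ ∨ p.2 ∈ Λ),
        S.A p.1 p.2 (σ p.1) (σ p.2)

/-- The conditional Gibbs distribution `μ^τ` with free set `Λ` and pinning `τ`. -/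
noncomputable def condDist {G : SimpleGraph (Fin n)} (S : SpinSystem n q G)
    (Λ : Finset (Fin n)) (τ : Config n q) : Config n q → ℝ :=
  fun σ => condWeight S Λ τ σ / ∑ σ' : Config n q, condWeight S Λ τ σ'

/-- The Gibbs distribution of the spin system. -/
noncomputable def gibbsDist {G : SimpleGraph (Fin n)} (S : SpinSystem n q G) :
    Config n q → ℝ :=
  fun σ => condWeight S univ σ σ / ∑ σ' : Config n q, condWeight S univ σ' σ'

/-- Every conditional weight has positive total mass. -/
def PosCondMass {G : SimpleGraph (Fin n)} (S : SpinSystem n q G) : Prop :=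
  ∀ (Λ : Finset (Fin n)) (τ : Config n q), 0 < ∑ σ : Config n q, condWeight S Λ τ σ

/-- Expectation of `f` under (the finitely supported density) `μ`. -/
noncomputable def expVal (μ f : Config n q → ℝ) : ℝ := ∑ σ, μ σ * f σ

/-- Variance of `f` under `μ`. -/
noncomputable def varD (μ f : Config n q → ℝ) : ℝ :=
  expVal μ fun σ => (f σ - expVal μ f) ^ 2

/-- `μ` conditioned to agree with `σ₀` on the set `T`. -/
noncomputable def restrictDist (μ : Config n q → ℝ) (T : Finset (Fin n)) (σ₀ : Config n q) :
    Config n q → ℝ :=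
  fun σ => (if ∀ v ∈ T, σ v = σ₀ v then μ σ else 0)
    / ∑ σ' ∈ univ.filter (fun σ' : Config n q => ∀ v ∈ T, σ' v = σ₀ v), μ σ'

/-- `μ[Var_S[f]]`: the average over `σ ~ μ` of the variance of `f` under `μ`
conditioned on the coordinates outside the free set `Sfree`. -/
noncomputable def avgCondVar (μ : Config n q → ℝ) (Sfree : Finset (Fin n))
    (f : Config n q → ℝ) : ℝ :=
  ∑ σ, μ σ * varD (restrictDist μ Sfreeᶜ σ) f

/-- `C` is an upper bound on the relaxation time of the Glauber dynamics on `μ`: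
approximate tensorization of variance with constant `C`. -/
def IsRelaxBound (μ : Config n q → ℝ) (C : ℝ) : Prop :=
  0 ≤ C ∧ ∀ f : Config n q → ℝ,
    varD μ f ≤ C / (n : ℝ) * ∑ v : Fin n, avgCondVar μ {v} f

/-- `π` is a coupling of `μ` and `ν`. -/
structure IsCoupling (μ ν : Config n q → ℝ) (π : Config n q → Config n q → ℝ) : Prop where
  nonneg : ∀ x y, 0 ≤ π x y
  fst_marginal : ∀ x, ∑ y, π x y = μ x
  snd_marginal : ∀ y, ∑ x, π x y = ν y

/-- Weighted Hamming distance with weight function `ρ`. -/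
noncomputable def hamW (ρ : Fin n → ℕ) (x y : Config n q) : ℝ :=
  ∑ v ∈ univ.filter (fun v => x v ≠ y v), (ρ v : ℝ)

/-- Expected weighted Hamming distance under a coupling `π`. -/
noncomputable def expHam (π : Config n q → Config n q → ℝ) (ρ : Fin n → ℕ) : ℝ :=
  ∑ x, ∑ y, π x y * hamW ρ x y

/-- Coupling independence (with a fixed witnessing weight `ρ`) of the Gibbs
distribution of the spin system `S`, using Gibbs conditional distributions. -/
def CoupIndepWith {G : SimpleGraph (Fin n)} (S : SpinSystem n q G) (ρ : Fin n → ℕ)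
    (C : ℝ) : Prop :=
  (∀ v, 0 < ρ v) ∧
  ∀ (P : Finset (Fin n)) (v₀ : Fin n) (σ₁ σ₂ : Config n q),
    v₀ ∈ P → σ₁ v₀ ≠ σ₂ v₀ → (∀ v ∈ P, v ≠ v₀ → σ₁ v = σ₂ v) →
    ∃ π, IsCoupling (condDist S Pᶜ σ₁) (condDist S Pᶜ σ₂) π ∧
      expHam π ρ ≤ C * (ρ v₀ : ℝ)

/-- The spin system `S` is `C`-coupling independent. -/
def CoupIndep {G : SimpleGraph (Fin n)} (S : SpinSystem n q G) (C : ℝ) : Prop :=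
  ∃ ρ : Fin n → ℕ, CoupIndepWith S ρ C

/-- `C`-coupling independence for a bare distribution `μ`, using conditionals
obtained by restriction. -/
def CoupIndepDist (μ : Config n q → ℝ) (C : ℝ) : Prop :=
  ∃ ρ : Fin n → ℕ, (∀ v, 0 < ρ v) ∧
  ∀ (P : Finset (Fin n)) (v₀ : Fin n) (σ₁ σ₂ : Config n q),
    v₀ ∈ P → σ₁ v₀ ≠ σ₂ v₀ → (∀ v ∈ P, v ≠ v₀ → σ₁ v = σ₂ v) →
    ∃ π, IsCoupling (restrictDist μ P σ₁) (restrictDist μ P σ₂) π ∧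
      expHam π ρ ≤ C * (ρ v₀ : ℝ)

/-- `Λ ∈ D(η)`: the induced subgraph `G[Λ]` has maximum degree at most `η·Δ`. -/
def InDeta (G : SimpleGraph (Fin n)) (η : ℝ) (Λ : Finset (Fin n)) : Prop :=
  ∀ v ∈ Λ, (degIn G Λ v : ℝ) ≤ η * (maxDeg G : ℝ)

/-- `U` is a partition of the vertex set into `k` (possibly empty) parts. -/
def IsPartition (U : Fin k → Finset (Fin n)) : Prop :=
  (∀ i j, i ≠ j → Disjoint (U i) (U j)) ∧ ∀ v : Fin n, ∃ i, v ∈ U i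

/-- A `(ξ,k)`-degree partition of `G`. -/
def IsDegreePartition (G : SimpleGraph (Fin n)) (ξ : ℝ) (U : Fin k → Finset (Fin n)) :
    Prop :=
  IsPartition U ∧ ∀ (v : Fin n) (i : Fin k),
    (degIn G (U i) v : ℝ) ≤ (1 + ξ) * (maxDeg G : ℝ) / (k : ℝ)

/-- `U_R = ⋃_{i ∈ R} U_i`. -/
noncomputable def unionBlocks (U : Fin k → Finset (Fin n)) (R : Finset (Fin k)) :
    Finset (Fin n) :=
  R.biUnion U

/-- The Glauber update `P_v` at vertex `v` for the distribution `μ`. -/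
noncomputable def glauberUpdate (μ : Config n q → ℝ) (v : Fin n) (x y : Config n q) : ℝ :=
  if ∀ u, u ≠ v → y u = x u then
    (if 0 < ∑ σ ∈ univ.filter (fun σ : Config n q => ∀ u, u ≠ v → σ u = x u), μ σ then
      μ y / ∑ σ ∈ univ.filter (fun σ : Config n q => ∀ u, u ≠ v → σ u = x u), μ σ
    else if y = x then 1 else 0)
  else 0

/-- The transition matrix of the Glauber dynamics on `μ`. -/
noncomputable def glauberP (μ : Config n q → ℝ) : Config n q → Config n q → ℝ :=
  fun x y => (1 / (n : ℝ)) * ∑ v : Fin n, glauberUpdate μ v x y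

/-- One step of a Markov kernel applied to a distribution. -/
noncomputable def stepD (P : Config n q → Config n q → ℝ) (ν : Config n q → ℝ) :
    Config n q → ℝ :=
  fun y => ∑ x, ν x * P x y

/-- The Dirac distribution at `x₀`. -/
noncomputable def delta (x₀ : Config n q) : Config n q → ℝ :=
  fun y => if y = x₀ then 1 else 0

/-- Total variation distance. -/
noncomputable def dTV (μ ν : Config n q → ℝ) : ℝ := (1 / 2) * ∑ σ, |μ σ - ν σ|

/-- TV distance to `μ` after `t` steps of the Glauber dynamics on `μ` started at `x₀`. -/
noncomputable def glauberDist (μ : Config n q → ℝ) (x₀ : Config n q) (t : ℕ) : ℝ :=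
  dTV ((stepD (glauberP μ))^[t] (delta x₀)) μ

/-- Coordinatewise partial order on configurations induced by the per-vertex
total orders `le`. -/
def ConfLE (le : Fin n → Fin q → Fin q → Prop) (x y : Config n q) : Prop :=
  ∀ v, le v (x v) (y v)

/-- Stochastic domination with respect to the order `le`. -/
def StochDom (le : Fin n → Fin q → Fin q → Prop) (μ ν : Config n q → ℝ) : Prop :=
  ∃ π, IsCoupling μ ν π ∧ ∀ x y, π x y ≠ 0 → ConfLE le x y

/-- `μ` is a monotone spin system w.r.t. the per-vertex orders `le`. -/
def MonotoneSystem (le : Fin n → Fin q → Fin q → Prop) (μ : Config n q → ℝ) : Prop :=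
  ∀ (v : Fin n) (x y : Config n q), ConfLE le x y →
    StochDom le (glauberUpdate μ v x) (glauberUpdate μ v y)

/-- Hardcore weight: spin `1` means occupied. -/
noncomputable def hcWeight (G : SimpleGraph (Fin n)) (lam : ℝ) (σ : Config n 2) : ℝ :=
  if ∀ u v, G.Adj u v → ¬(σ u = 1 ∧ σ v = 1) then
    lam ^ (univ.filter fun v => σ v = 1).card
  else 0

/-- The hardcore distribution on `G` with fugacity `lam`. -/
noncomputable def hardcoreDist (G : SimpleGraph (Fin n)) (lam : ℝ) : Config n 2 → ℝ :=
  fun σ => hcWeight G lam σ / ∑ σ' : Config n 2, hcWeight G lam σ'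

/-- The tree uniqueness threshold `λ_c(Δ)`. -/
noncomputable def lambdaC (Δ : ℕ) : ℝ := ((Δ : ℝ) - 1) ^ (Δ - 1) / ((Δ : ℝ) - 2) ^ Δ

/-- `G` is bipartite with parts `VL` and `VLᶜ`. -/
def Bipartite (G : SimpleGraph (Fin n)) (VL : Finset (Fin n)) : Prop :=
  ∀ u v, G.Adj u v → (u ∈ VL ↔ v ∉ VL)

/-- Maximum degree of `G` among the vertices of `W`. -/
noncomputable def maxDegOn (G : SimpleGraph (Fin n)) (W : Finset (Fin n)) : ℕ :=
  W.sup fun v => degIn G univ v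

/-- The marginal of `μ` on `W`, realized as a distribution on full configurations
that vanish (take spin `0`) outside of `W`. -/
noncomputable def marginalOn (μ : Config n 2 → ℝ) (W : Finset (Fin n)) :
    Config n 2 → ℝ :=
  fun σ => if ∀ v, v ∉ W → σ v = 0 then
      ∑ σ' ∈ univ.filter (fun σ' : Config n 2 => ∀ v ∈ W, σ' v = σ v), μ σ'
    else 0

/-- Proper list colorings of `G` with lists `L`. -/
noncomputable def properColorings (G : SimpleGraph (Fin n)) (L : Fin n → Finset (Fin q)) :
    Finset (Config n q) :=
  univ.filter fun σ => (∀ v, σ v ∈ L v) ∧ ∀ u v, G.Adj u v → σ u ≠ σ v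

/-- Uniform distribution over a finite set of configurations. -/
noncomputable def uniformOn (Ω : Finset (Config n q)) : Config n q → ℝ :=
  fun σ => if σ ∈ Ω then (1 : ℝ) / (Ω.card : ℝ) else 0

/-- The subgraph of `G` induced on `W` (kept on the same vertex type). -/
def restrictG (G : SimpleGraph (Fin n)) (W : Finset (Fin n)) : SimpleGraph (Fin n) where
  Adj u v := G.Adj u v ∧ u ∈ W ∧ v ∈ W
  symm := ⟨fun u v h => ⟨h.1.symm, h.2.2, h.2.1⟩⟩
  loopless := ⟨fun v h => G.irrefl h.1⟩

/-- The vertex set of the connected component of `v` in `G[W]` (empty if `v ∉ W`). -/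
noncomputable def compIn (G : SimpleGraph (Fin n)) (W : Finset (Fin n)) (v : Fin n) :
    Finset (Fin n) :=
  if v ∈ W then univ.filter (fun w => w ∈ W ∧ (restrictG G W).Reachable v w) else ∅


/-!
Write `ν` for the marginal of `μ` on `V_L` and `P_R = V_L \ U_R`. Since `P_R ⊆ V_L`, the law of
total variance splits `μ[Var_{U_R ∪ V_R} f]` into `μ[Var_{V_R} f]`, the same for every `R`, plus
`ν[Var_{U_R} F]` for the `V_L`-measurable `F = μ[f | V_L]`. So it suffices to factorise the
variance under `ν` over `2M`-sets of blocks, which is done one block at a time.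

For `|J| > 2M` and a pinning outside `U_J`, let `K` average over `i ∈ J` the heat-bath moves that
resample `U_{J \ i}`. It is reversible and positive semidefinite, and since a single-site change
is felt by at most one of these moves, coupling independence makes `K` contract Lipschitz constants
(for the weighted Hamming metric) by `M / |J| ≤ 1 / 2`. Hence `⟨h, Kᵗ h⟩ = O(2⁻ᵗ)` for centred
`h`, and log-convexity of this sequence gives the spectral gap `⟨h, K h⟩ ≤ ⟨h, h⟩ / 2`, that is
`Var ≤ (2 / |J|) ∑_{i ∈ J} E[Var_{U_{J \ i}}]`. Iterating down from `J = [k]`, every `2M`-set is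
reached along `(k - 2M)!` removal orders, and the constants combine to `2^{k-2M} / C(k, 2M)`.
-/

open Matrix

lemma le_of_forall_pow_le_mul_pow {x y C : ℝ} (hy : 0 < y) (h : ∀ t : ℕ, x ^ t ≤ C * y ^ t) :
    x ≤ y := by
  by_contra! hyx
  obtain ⟨t, ht⟩ := pow_unbounded_of_one_lt C ((one_lt_div hy).2 hyx)
  rw [div_pow, lt_div_iff₀ (pow_pos hy t)] at ht
  linarith [h t]

lemma le_mul_of_sq_le_mul_of_le_geom {a : ℕ → ℝ} (ha : ∀ t, 0 ≤ a t)
    (hlc : ∀ t, a (t + 1) ^ 2 ≤ a t * a (t + 2)) {C γ : ℝ} (hγ : 0 < γ)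
    (hdecay : ∀ t, a t ≤ C * γ ^ t) : a 1 ≤ γ * a 0 := by
  have hratio : ∀ t, a 1 * a t ≤ a 0 * a (t + 1) := by
    intro t
    induction t with
    | zero => rw [mul_comm]
    | succ t ih =>
      rcases (ha (t + 1)).eq_or_lt with h0 | hpos
      · rw [← h0, mul_zero]
        exact mul_nonneg (ha 0) (ha _)
      · refine le_of_mul_le_mul_right ?_ hpos
        nlinarith [mul_le_mul_of_nonneg_right ih (ha (t + 2)),
          mul_le_mul_of_nonneg_left (hlc t) (ha 1)]
  have hgrowth : ∀ t, a 1 ^ t * a 0 ≤ a 0 ^ t * a t := by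
    intro t
    induction t with
    | zero => simp
    | succ t ih =>
      calc a 1 ^ (t + 1) * a 0 = a 1 * (a 1 ^ t * a 0) := by ring
        _ ≤ a 1 * (a 0 ^ t * a t) := mul_le_mul_of_nonneg_left ih (ha 1)
        _ = a 0 ^ t * (a 1 * a t) := by ring
        _ ≤ a 0 ^ t * (a 0 * a (t + 1)) :=
          mul_le_mul_of_nonneg_left (hratio t) (pow_nonneg (ha 0) t)
        _ = a 0 ^ (t + 1) * a (t + 1) := by ring
  rcases (ha 0).eq_or_lt with h0 | h0
  · have h1 := hlc 0
    rw [← h0, zero_mul] at h1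
    rw [← h0, mul_zero]
    nlinarith [ha 1]
  · refine le_of_forall_pow_le_mul_pow (C := C / a 0) (mul_pos hγ h0) fun t => ?_
    rw [div_mul_eq_mul_div, le_div_iff₀ h0]
    calc a 1 ^ t * a 0 ≤ a 0 ^ t * a t := hgrowth t
      _ ≤ a 0 ^ t * (C * γ ^ t) := mul_le_mul_of_nonneg_left (hdecay t) (pow_nonneg (ha 0) t)
      _ = C * (γ * a 0) ^ t := by ring

section Reversible

variable {α : Type*}

def IsReversible (w : α → ℝ) (K : Matrix α α ℝ) : Prop := ∀ x y, w x * K x y = w y * K y x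

lemma isReversible_one [DecidableEq α] {w : α → ℝ} : IsReversible w (1 : Matrix α α ℝ) := by
  intro x y
  rcases eq_or_ne x y with rfl | hxy
  · rfl
  · simp [one_apply_ne hxy, one_apply_ne hxy.symm]

variable [Fintype α]

def wInner (w u v : α → ℝ) : ℝ := ∑ x, w x * (u x * v x)

variable {w : α → ℝ} {K : Matrix α α ℝ}

lemma wInner_comm (u v : α → ℝ) : wInner w u v = wInner w v u := by
  simp only [wInner, mul_comm (u _)]

lemma wInner_self_nonneg (hw : ∀ x, 0 ≤ w x) (u : α → ℝ) : 0 ≤ wInner w u u :=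
  Finset.sum_nonneg fun x _ => mul_nonneg (hw x) (mul_self_nonneg _)

lemma IsReversible.wInner_mulVec (hK : IsReversible w K) (u v : α → ℝ) :
    wInner w u (K *ᵥ v) = wInner w (K *ᵥ u) v := by
  simp only [wInner, mulVec, dotProduct, Finset.mul_sum, Finset.sum_mul]
  rw [Finset.sum_comm]
  refine Finset.sum_congr rfl fun y _ => Finset.sum_congr rfl fun x _ => ?_
  linear_combination (u x * v y) * hK x y

lemma IsReversible.sum_mul_mulVec (hK : IsReversible w K) (hrow : ∀ x, ∑ y, K x y = 1)
    (v : α → ℝ) : ∑ x, w x * (K *ᵥ v) x = ∑ x, w x * v x := by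
  have hone : K *ᵥ (fun _ => (1 : ℝ)) = fun _ => 1 := funext fun x => by
    simp [mulVec, dotProduct, hrow]
  simpa [wInner, hone] using hK.wInner_mulVec (fun _ => 1) v

lemma IsReversible.sq_wInner_mulVec_le (hK : IsReversible w K)
    (hpsd : ∀ u, 0 ≤ wInner w u (K *ᵥ u)) (u v : α → ℝ) :
    wInner w u (K *ᵥ v) ^ 2 ≤ wInner w u (K *ᵥ u) * wInner w v (K *ᵥ v) := by
  have hvu : wInner w v (K *ᵥ u) = wInner w u (K *ᵥ v) := by
    rw [hK.wInner_mulVec, wInner_comm]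
  have hquad : ∀ t : ℝ, 0 ≤ wInner w v (K *ᵥ v) * (t * t) + 2 * wInner w u (K *ᵥ v) * t
      + wInner w u (K *ᵥ u) := by
    intro t
    have hexpand : wInner w (u + t • v) (K *ᵥ (u + t • v)) = wInner w u (K *ᵥ u)
        + t * wInner w u (K *ᵥ v) + t * wInner w v (K *ᵥ u) + t * t * wInner w v (K *ᵥ v) := by
      simp only [wInner, mulVec_add, mulVec_smul, Pi.add_apply, Pi.smul_apply, smul_eq_mul,
        Finset.mul_sum, ← Finset.sum_add_distrib]
      exact Finset.sum_congr rfl fun x _ => by ring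
    rw [hvu] at hexpand
    linarith [hpsd (u + t • v)]
  have := discrim_le_zero hquad
  rw [discrim] at this
  nlinarith

lemma sq_wInner_le [DecidableEq α] (hw : ∀ x, 0 ≤ w x) (u v : α → ℝ) :
    wInner w u v ^ 2 ≤ wInner w u u * wInner w v v := by
  simpa using isReversible_one.sq_wInner_mulVec_le
    (fun u => by simpa using wInner_self_nonneg hw u) u v

lemma IsReversible.wInner_pow_mulVec [DecidableEq α] (hK : IsReversible w K) (h : α → ℝ) (s t : ℕ) :
    wInner w ((K ^ s) *ᵥ h) ((K ^ t) *ᵥ h) = wInner w h ((K ^ (s + t)) *ᵥ h) := by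
  induction s generalizing t with
  | zero => simp
  | succ s ih =>
    rw [pow_succ', ← mulVec_mulVec, ← hK.wInner_mulVec, mulVec_mulVec, ← pow_succ', ih,
      Nat.succ_add_eq_add_succ]

lemma IsReversible.wInner_mulVec_self_nonneg (hw : ∀ x, 0 ≤ w x) (hK : IsReversible w K)
    (hKK : K * K = K) (u : α → ℝ) : 0 ≤ wInner w u (K *ᵥ u) := by
  rw [← hKK, ← mulVec_mulVec, hK.wInner_mulVec]
  exact wInner_self_nonneg hw _

/-- `t ↦ ⟨h, Kᵗ h⟩` is log-convex, so its decay at rate `γ` bounds its first ratio by `γ`. -/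
lemma IsReversible.wInner_mulVec_le_of_le_geom [DecidableEq α] (hw : ∀ x, 0 ≤ w x)
    (hK : IsReversible w K) (hpsd : ∀ u, 0 ≤ wInner w u (K *ᵥ u)) {h : α → ℝ} {C γ : ℝ} (hγ : 0 < γ)
    (hdecay : ∀ t, wInner w h ((K ^ t) *ᵥ h) ≤ C * γ ^ t) :
    wInner w h (K *ᵥ h) ≤ γ * wInner w h h := by
  set a : ℕ → ℝ := fun t => wInner w h ((K ^ t) *ᵥ h)
  have hshift : ∀ s t, wInner w ((K ^ s) *ᵥ h) ((K ^ t) *ᵥ h) = a (s + t) :=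
    hK.wInner_pow_mulVec h
  have hsucc : ∀ s, K *ᵥ ((K ^ s) *ᵥ h) = (K ^ (s + 1)) *ᵥ h := fun s => by
    rw [mulVec_mulVec, pow_succ']
  have ha : ∀ t, 0 ≤ a t := by
    intro t
    obtain ⟨s, rfl | rfl⟩ := Nat.even_or_odd' t
    · rw [two_mul, ← hshift]
      exact wInner_self_nonneg hw _
    · have := hpsd ((K ^ s) *ᵥ h)
      rw [hsucc, hshift] at this
      convert this using 2
      omega
  have hlc : ∀ t, a (t + 1) ^ 2 ≤ a t * a (t + 2) := by
    intro t
    obtain ⟨s, rfl | rfl⟩ := Nat.even_or_odd' t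
    · have := sq_wInner_le hw ((K ^ s) *ᵥ h) ((K ^ (s + 1)) *ᵥ h)
      rw [hshift, hshift, hshift] at this
      convert this using 3 <;> omega
    · have := hK.sq_wInner_mulVec_le hpsd ((K ^ s) *ᵥ h) ((K ^ (s + 1)) *ᵥ h)
      rw [hsucc, hsucc, hshift, hshift, hshift] at this
      convert this using 3 <;> omega
  simpa [a] using le_mul_of_sq_le_mul_of_le_geom ha hlc hγ hdecay

end Reversible

section PinKernel

variable {m : Config n q → ℝ} {P P' : Finset (Fin n)} {x y : Config n q}

noncomputable def pinMass (m : Config n q → ℝ) (P : Finset (Fin n)) (x : Config n q) : ℝ :=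
  ∑ a ∈ univ.filter (fun a : Config n q => ∀ v ∈ P, a v = x v), m a

/-- The heat-bath move that keeps the coordinates in `P` and resamples the others from `m`. -/
noncomputable def pinKernel (m : Config n q → ℝ) (P : Finset (Fin n)) :
    Matrix (Config n q) (Config n q) ℝ :=
  Matrix.of (restrictDist m P)

lemma restrictDist_eq_div (m : Config n q → ℝ) (P : Finset (Fin n)) (x a : Config n q) :
    restrictDist m P x a = (if ∀ v ∈ P, a v = x v then m a else 0) / pinMass m P x := rfl

lemma pinMass_congr (h : ∀ v ∈ P, x v = y v) : pinMass m P x = pinMass m P y := by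
  have key : ∀ a : Config n q, (∀ v ∈ P, a v = x v) ↔ ∀ v ∈ P, a v = y v :=
    fun a => forall₂_congr fun v hv => by rw [h v hv]
  simp only [pinMass, key]

lemma restrictDist_congr (h : ∀ v ∈ P, x v = y v) : restrictDist m P x = restrictDist m P y := by
  have key : ∀ a : Config n q, (∀ v ∈ P, a v = x v) ↔ ∀ v ∈ P, a v = y v :=
    fun a => forall₂_congr fun v hv => by rw [h v hv]
  funext a
  simp only [restrictDist_eq_div, key, pinMass_congr (m := m) h]

lemma restrictDist_nonneg (hm : ∀ a, 0 ≤ m a) (x a : Config n q) : 0 ≤ restrictDist m P x a :=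
  div_nonneg (by split_ifs <;> simp [hm a]) (Finset.sum_nonneg fun a _ => hm a)

lemma sum_restrictDist (h : 0 < pinMass m P x) : ∑ a, restrictDist m P x a = 1 := by
  simp only [restrictDist_eq_div, ← Finset.sum_div, ← Finset.sum_filter]
  exact div_self h.ne'

lemma eq_on_of_restrictDist_ne_zero {a : Config n q} (h : restrictDist m P x a ≠ 0) :
    ∀ v ∈ P, a v = x v := by
  by_contra hc
  simp [restrictDist_eq_div, hc] at h

lemma restrictDist_empty (hm : ∑ a, m a = 1) (x : Config n q) : restrictDist m ∅ x = m := by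
  funext a
  simp [restrictDist, hm]

lemma isReversible_pinKernel (hP : P ⊆ P') (σ : Config n q) :
    IsReversible (restrictDist m P σ) (pinKernel m P') := by
  intro x a
  simp only [pinKernel, of_apply]
  by_cases hxa : ∀ v ∈ P', a v = x v
  · have hax : ∀ v ∈ P', x v = a v := fun v hv => (hxa v hv).symm
    have hσ : (∀ v ∈ P, x v = σ v) ↔ ∀ v ∈ P, a v = σ v :=
      forall₂_congr fun v hv => by rw [hxa v (hP hv)]
    simp only [restrictDist_eq_div, if_pos hxa, if_pos hax, pinMass_congr hax, hσ]
    split_ifs <;> ring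
  · have hax : ¬ ∀ v ∈ P', x v = a v := fun h => hxa fun v hv => (h v hv).symm
    simp [restrictDist_eq_div, hxa, hax]

lemma isReversible_pinKernel_self (hm : ∑ a, m a = 1) : IsReversible m (pinKernel m P) := by
  intro x y
  simpa [restrictDist_empty hm] using isReversible_pinKernel (m := m) (Finset.empty_subset P) x x y

lemma sum_pinKernel_row (h : 0 < pinMass m P x) : ∑ a, pinKernel m P x a = 1 :=
  sum_restrictDist h

lemma pinKernel_mul_of_subset (hP : P ⊆ P') (hpos : ∀ x, 0 < pinMass m P' x) :
    pinKernel m P * pinKernel m P' = pinKernel m P := by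
  ext x b
  calc ∑ a, pinKernel m P x a * pinKernel m P' a b
      = ∑ a, pinKernel m P x b * pinKernel m P' b a :=
        Finset.sum_congr rfl fun a _ => isReversible_pinKernel hP x a b
    _ = pinKernel m P x b := by rw [← Finset.mul_sum, sum_pinKernel_row (hpos b), mul_one]

lemma pinKernel_mul_of_supset (hP : P ⊆ P') (hpos : ∀ x, 0 < pinMass m P' x) :
    pinKernel m P' * pinKernel m P = pinKernel m P := by
  ext x b
  have hrow : ∀ a, pinKernel m P' x a * pinKernel m P a b
      = pinKernel m P' x a * pinKernel m P x b := by
    intro a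
    by_cases h0 : restrictDist m P' x a = 0
    · simp [pinKernel, h0]
    · simp only [pinKernel, of_apply,
        restrictDist_congr fun v hv => eq_on_of_restrictDist_ne_zero h0 v (hP hv)]
  simp only [mul_apply, hrow, ← Finset.sum_mul, sum_pinKernel_row (hpos x), one_mul]

lemma pinKernel_mul_self (hpos : ∀ x, 0 < pinMass m P x) :
    pinKernel m P * pinKernel m P = pinKernel m P :=
  pinKernel_mul_of_subset subset_rfl hpos

end PinKernel

section Variance

variable {μ : Config n q → ℝ}

lemma varD_eq_expVal_sq_sub (hμ : ∑ a, μ a = 1) (f : Config n q → ℝ) :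
    varD μ f = expVal μ (fun a => f a ^ 2) - expVal μ f ^ 2 := by
  set e := expVal μ f
  have : ∑ a, μ a * (f a - e) ^ 2 = ∑ a, μ a * f a ^ 2 - 2 * e * ∑ a, μ a * f a
      + e ^ 2 * ∑ a, μ a := by
    simp only [Finset.mul_sum, ← Finset.sum_sub_distrib, ← Finset.sum_add_distrib]
    exact Finset.sum_congr rfl fun a _ => by ring
  rw [varD, expVal, this, hμ]
  simp only [expVal, e]
  ring

lemma varD_sub_const (hμ : ∑ a, μ a = 1) (f : Config n q → ℝ) (c : ℝ) :
    varD μ (fun a => f a - c) = varD μ f := by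
  have he : expVal μ (fun a => f a - c) = expVal μ f - c := by
    simp [expVal, mul_sub, Finset.sum_sub_distrib, ← Finset.sum_mul, hμ]
  simp only [varD, he, sub_sub_sub_cancel_right]

lemma varD_nonneg (hμ : ∀ a, 0 ≤ μ a) (f : Config n q → ℝ) : 0 ≤ varD μ f :=
  Finset.sum_nonneg fun a _ => mul_nonneg (hμ a) (sq_nonneg _)

lemma IsReversible.sum_mul_varD {w : Config n q → ℝ} {K : Matrix (Config n q) (Config n q) ℝ}
    (hK : IsReversible w K) (hrow : ∀ x, ∑ y, K x y = 1) (hKK : K * K = K)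
    (g : Config n q → ℝ) :
    ∑ x, w x * varD (K x) g = wInner w g g - wInner w g (K *ᵥ g) := by
  have hvar : ∀ x, varD (K x) g = (K *ᵥ fun a => g a ^ 2) x - (K *ᵥ g) x ^ 2 :=
    fun x => varD_eq_expVal_sq_sub (hrow x) g
  have hsq : ∑ x, w x * (K *ᵥ fun a => g a ^ 2) x = wInner w g g := by
    rw [hK.sum_mul_mulVec hrow]
    simp [wInner, sq]
  have hKg : wInner w (K *ᵥ g) (K *ᵥ g) = wInner w g (K *ᵥ g) := by
    rw [← hK.wInner_mulVec, mulVec_mulVec, hKK]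
  simp only [hvar, mul_sub, Finset.sum_sub_distrib]
  rw [hsq, ← hKg]
  simp only [wInner, sq]

/-- `avgCondVar μ S f = pinVar μ Sᶜ f`: indexed by the pinned set rather than the free one. -/
noncomputable def pinVar (μ : Config n q → ℝ) (P : Finset (Fin n)) (f : Config n q → ℝ) : ℝ :=
  ∑ σ, μ σ * varD (restrictDist μ P σ) f

lemma pinVar_empty (hμ : ∑ a, μ a = 1) (f : Config n q → ℝ) : pinVar μ ∅ f = varD μ f := by
  simp [pinVar, restrictDist_empty hμ, ← Finset.sum_mul, hμ]

lemma pinVar_nonneg (hμ : ∀ a, 0 ≤ μ a) (P : Finset (Fin n)) (f : Config n q → ℝ) :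
    0 ≤ pinVar μ P f :=
  Finset.sum_nonneg fun σ _ =>
    mul_nonneg (hμ σ) (varD_nonneg (restrictDist_nonneg hμ σ) f)

lemma pinVar_eq_wInner_sub {P : Finset (Fin n)} (hμ : ∑ a, μ a = 1) (hpos : ∀ x, 0 < pinMass μ P x)
    (f : Config n q → ℝ) :
    pinVar μ P f = wInner μ f f - wInner μ f (pinKernel μ P *ᵥ f) :=
  (isReversible_pinKernel_self hμ).sum_mul_varD (fun x => sum_pinKernel_row (hpos x))
    (pinKernel_mul_self hpos) f

/-- Law of total variance, averaged over the pinning. -/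
lemma pinVar_eq_pinVar_add_pinVar {P P' : Finset (Fin n)} (hμ : ∑ a, μ a = 1) (hP : P ⊆ P')
    (hpos : ∀ x, 0 < pinMass μ P x) (hpos' : ∀ x, 0 < pinMass μ P' x) (f : Config n q → ℝ) :
    pinVar μ P f = pinVar μ P' f + pinVar μ P (pinKernel μ P' *ᵥ f) := by
  have hK' := isReversible_pinKernel_self (P := P') hμ
  have h1 : wInner μ (pinKernel μ P' *ᵥ f) (pinKernel μ P' *ᵥ f)
      = wInner μ f (pinKernel μ P' *ᵥ f) := by
    rw [← hK'.wInner_mulVec, mulVec_mulVec, pinKernel_mul_self hpos']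
  have h2 : wInner μ (pinKernel μ P' *ᵥ f) (pinKernel μ P *ᵥ (pinKernel μ P' *ᵥ f))
      = wInner μ f (pinKernel μ P *ᵥ f) := by
    rw [mulVec_mulVec, pinKernel_mul_of_subset hP hpos', ← hK'.wInner_mulVec, mulVec_mulVec,
      pinKernel_mul_of_supset hP hpos']
  rw [pinVar_eq_wInner_sub hμ hpos, pinVar_eq_wInner_sub hμ hpos', pinVar_eq_wInner_sub hμ hpos,
    h1, h2]
  ring

end Variance

section Hamming

variable (ρ : Fin n → ℕ)

lemma hamW_nonneg (x y : Config n q) : 0 ≤ hamW ρ x y :=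
  Finset.sum_nonneg fun _ _ => Nat.cast_nonneg _

lemma hamW_self (x : Config n q) : hamW ρ x x = 0 := by
  simp [hamW]

lemma one_le_hamW (hρ : ∀ v, 0 < ρ v) {x y : Config n q} (hxy : x ≠ y) : 1 ≤ hamW ρ x y := by
  obtain ⟨v, hv⟩ := Function.ne_iff.mp hxy
  calc (1 : ℝ) ≤ ρ v := by exact_mod_cast hρ v
    _ ≤ hamW ρ x y :=
      Finset.single_le_sum (f := fun u => (ρ u : ℝ)) (fun u _ => Nat.cast_nonneg _)
        (by simp [hv])

lemma hamW_le_sum (x y : Config n q) : hamW ρ x y ≤ ∑ v, (ρ v : ℝ) :=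
  Finset.sum_le_sum_of_subset_of_nonneg (Finset.filter_subset _ _)
    fun _ _ _ => Nat.cast_nonneg _

lemma hamW_eq_add_hamW_update {x y : Config n q} {v₀ : Fin n} (hne : x v₀ ≠ y v₀) :
    hamW ρ x y = ρ v₀ + hamW ρ (Function.update x v₀ (y v₀)) y := by
  have hset : univ.filter (fun v => Function.update x v₀ (y v₀) v ≠ y v)
      = (univ.filter fun v => x v ≠ y v).erase v₀ := by
    ext v
    by_cases hv : v = v₀ <;> simp [hv]
  rw [hamW, hamW, hset]
  exact (Finset.add_sum_erase _ _ (by simp [hne])).symm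

end Hamming

section Lipschitz

variable {ρ : Fin n → ℕ} {P₀ : Finset (Fin n)} {L : ℝ} {h : Config n q → ℝ}

def IsHamLipschitz (ρ : Fin n → ℕ) (P₀ : Finset (Fin n)) (L : ℝ) (h : Config n q → ℝ) : Prop :=
  ∀ x y, (∀ v ∈ P₀, x v = y v) → |h x - h y| ≤ L * hamW ρ x y

lemma IsHamLipschitz.mono {L' : ℝ} (hh : IsHamLipschitz ρ P₀ L h) (hL : L ≤ L') :
    IsHamLipschitz ρ P₀ L' h := fun x y hxy =>
  (hh x y hxy).trans (mul_le_mul_of_nonneg_right hL (hamW_nonneg ρ x y))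

lemma isHamLipschitz_of_pos (hρ : ∀ v, 0 < ρ v) (P₀ : Finset (Fin n)) (h : Config n q → ℝ) :
    IsHamLipschitz ρ P₀ (2 * ∑ x, |h x|) h := by
  intro x y _
  have hsum : ∀ z, |h z| ≤ ∑ x, |h x| := fun z =>
    Finset.single_le_sum (f := fun x => |h x|) (fun _ _ => abs_nonneg _) (Finset.mem_univ z)
  rcases eq_or_ne x y with rfl | hxy
  · simp [hamW_self]
  · calc |h x - h y| ≤ |h x| + |h y| := abs_sub _ _
      _ ≤ 2 * ∑ x, |h x| := by linarith [hsum x, hsum y]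
      _ ≤ (2 * ∑ x, |h x|) * hamW ρ x y :=
        le_mul_of_one_le_right (by positivity) (one_le_hamW ρ hρ hxy)

lemma isHamLipschitz_of_update
    (hupd : ∀ x v₀ c, v₀ ∉ P₀ → |h x - h (Function.update x v₀ c)| ≤ L * ρ v₀) :
    IsHamLipschitz ρ P₀ L h := by
  suffices H : ∀ D : Finset (Fin n), ∀ x y : Config n q, (∀ v ∈ P₀, x v = y v) →
      (∀ v, x v ≠ y v → v ∈ D) → |h x - h y| ≤ L * hamW ρ x y from
    fun x y hxy => H univ x y hxy fun v _ => Finset.mem_univ v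
  intro D
  induction D using Finset.induction_on with
  | empty =>
    intro x y _ hD
    obtain rfl : x = y := funext fun v => by_contra fun hv => by simpa using hD v hv
    simp [hamW_self]
  | insert v₀ D _ ih =>
    intro x y hxy hD
    by_cases hv₀ : x v₀ = y v₀
    · refine ih x y hxy fun v hv => ?_
      rcases Finset.mem_insert.mp (hD v hv) with rfl | h'
      exacts [absurd hv₀ hv, h']
    set z := Function.update x v₀ (y v₀)
    have hz : ∀ v, v ≠ v₀ → z v = x v := fun v hv => Function.update_of_ne hv _ _
    have hv₀P : v₀ ∉ P₀ := fun hv => hv₀ (hxy v₀ hv)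
    have hzy : |h z - h y| ≤ L * hamW ρ z y := by
      refine ih z y (fun v hv => ?_) fun v hv => ?_
      · rw [hz v (ne_of_mem_of_not_mem hv hv₀P)]
        exact hxy v hv
      · rcases eq_or_ne v v₀ with rfl | hne
        · simp [z] at hv
        · rw [hz v hne] at hv
          exact (Finset.mem_insert.mp (hD v hv)).resolve_left hne
    calc |h x - h y| ≤ |h x - h z| + |h z - h y| := abs_sub_le _ _ _
      _ ≤ L * ρ v₀ + L * hamW ρ z y := add_le_add (hupd x v₀ (y v₀) hv₀P) hzy
      _ = L * hamW ρ x y := by rw [hamW_eq_add_hamW_update ρ hv₀]; ring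

end Lipschitz

section Coupling

variable {μ₁ μ₂ : Config n q → ℝ} {π : Config n q → Config n q → ℝ}

lemma IsCoupling.fst_ne_zero (hπ : IsCoupling μ₁ μ₂ π) {a b : Config n q} (h : π a b ≠ 0) :
    μ₁ a ≠ 0 := by
  rw [← hπ.fst_marginal]
  exact fun h0 => h ((Finset.sum_eq_zero_iff_of_nonneg fun b _ => hπ.nonneg a b).1 h0 b
    (Finset.mem_univ b))

lemma IsCoupling.snd_ne_zero (hπ : IsCoupling μ₁ μ₂ π) {a b : Config n q} (h : π a b ≠ 0) :
    μ₂ b ≠ 0 := by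
  rw [← hπ.snd_marginal]
  exact fun h0 => h ((Finset.sum_eq_zero_iff_of_nonneg fun a _ => hπ.nonneg a b).1 h0 a
    (Finset.mem_univ a))

lemma IsCoupling.abs_expVal_sub_le (hπ : IsCoupling μ₁ μ₂ π) {h : Config n q → ℝ} {L : ℝ}
    (ρ : Fin n → ℕ) (hh : ∀ a b, π a b ≠ 0 → |h a - h b| ≤ L * hamW ρ a b) :
    |expVal μ₁ h - expVal μ₂ h| ≤ L * expHam π ρ := by
  have hdiff : expVal μ₁ h - expVal μ₂ h = ∑ a, ∑ b, π a b * (h a - h b) := by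
    simp only [expVal, ← hπ.fst_marginal, ← hπ.snd_marginal, Finset.sum_mul, mul_sub,
      Finset.sum_sub_distrib]
    rw [Finset.sum_comm (f := fun b a => π a b * h b)]
  have hterm : ∀ a b, |π a b * (h a - h b)| ≤ L * (π a b * hamW ρ a b) := by
    intro a b
    rw [abs_mul, abs_of_nonneg (hπ.nonneg a b)]
    by_cases h0 : π a b = 0
    · simp [h0]
    · nlinarith [hh a b h0, hπ.nonneg a b]
  calc |expVal μ₁ h - expVal μ₂ h| ≤ ∑ a, ∑ b, |π a b * (h a - h b)| := by
        rw [hdiff]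
        exact (Finset.abs_sum_le_sum_abs _ _).trans
          (Finset.sum_le_sum fun a _ => Finset.abs_sum_le_sum_abs _ _)
    _ ≤ ∑ a, ∑ b, L * (π a b * hamW ρ a b) :=
        Finset.sum_le_sum fun a _ => Finset.sum_le_sum fun b _ => hterm a b
    _ = L * expHam π ρ := by simp only [expHam, Finset.mul_sum]

end Coupling

section BlockKernel

def CoupIndepOn (ν : Config n q → ℝ) (VL : Finset (Fin n)) (ρ : Fin n → ℕ) (M : ℝ) : Prop :=
  ∀ P : Finset (Fin n), P ⊆ VL → ∀ v₀ ∈ P, ∀ σ₁ σ₂ : Config n q, σ₁ v₀ ≠ σ₂ v₀ →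
    (∀ v ∈ P, v ≠ v₀ → σ₁ v = σ₂ v) →
    ∃ π, IsCoupling (restrictDist ν P σ₁) (restrictDist ν P σ₂) π ∧ expHam π ρ ≤ M * ρ v₀

variable {ν : Config n q → ℝ} {VL P₀ P : Finset (Fin n)} {ρ : Fin n → ℕ} {M L : ℝ}
  {h : Config n q → ℝ}

lemma pinKernel_mulVec_update_of_notMem {v₀ : Fin n} (hv₀ : v₀ ∉ P) (x : Config n q) (c : Fin q) :
    (pinKernel ν P *ᵥ h) (Function.update x v₀ c) = (pinKernel ν P *ᵥ h) x := by
  have : restrictDist ν P (Function.update x v₀ c) = restrictDist ν P x :=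
    restrictDist_congr fun v hv => Function.update_of_ne (ne_of_mem_of_not_mem hv hv₀) _ _
  exact congrArg (expVal · h) this

lemma abs_pinKernel_mulVec_sub_update_le (hCI : CoupIndepOn ν VL ρ M) (hM : 0 ≤ M) (hL : 0 ≤ L)
    (hPVL : P ⊆ VL) (hP₀ : P₀ ⊆ P) (hh : IsHamLipschitz ρ P₀ L h) (x : Config n q) {v₀ : Fin n}
    (hv₀ : v₀ ∉ P₀) (c : Fin q) :
    |(pinKernel ν P *ᵥ h) x - (pinKernel ν P *ᵥ h) (Function.update x v₀ c)| ≤ M * L * ρ v₀ := by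
  have hB : 0 ≤ M * L * ρ v₀ := by positivity
  by_cases hv₀P : v₀ ∈ P
  · set y := Function.update x v₀ c
    have hxy : ∀ v, v ≠ v₀ → x v = y v := fun v hv => (Function.update_of_ne hv _ _).symm
    by_cases hxc : x v₀ = c
    · simp [y, ← hxc, hB]
    obtain ⟨π, hπ, hham⟩ :=
      hCI P hPVL v₀ hv₀P x y (by simpa [y] using hxc) fun v _ hv => hxy v hv
    have hsupp : ∀ a b, π a b ≠ 0 → |h a - h b| ≤ L * hamW ρ a b := by
      intro a b hab
      refine hh a b fun v hv => ?_
      rw [eq_on_of_restrictDist_ne_zero (hπ.fst_ne_zero hab) v (hP₀ hv),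
        eq_on_of_restrictDist_ne_zero (hπ.snd_ne_zero hab) v (hP₀ hv),
        hxy v (ne_of_mem_of_not_mem hv hv₀)]
    calc _ ≤ L * expHam π ρ := hπ.abs_expVal_sub_le ρ hsupp
      _ ≤ L * (M * ρ v₀) := mul_le_mul_of_nonneg_left hham hL
      _ = M * L * ρ v₀ := by ring
  · rwa [pinKernel_mulVec_update_of_notMem hv₀P, sub_self, abs_zero]

variable {ι : Type*} {J : Finset ι} {P : ι → Finset (Fin n)}

noncomputable def blockKernel (ν : Config n q → ℝ) (J : Finset ι) (P : ι → Finset (Fin n)) :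
    Matrix (Config n q) (Config n q) ℝ :=
  (#J : ℝ)⁻¹ • ∑ i ∈ J, pinKernel ν (P i)

lemma blockKernel_mulVec_eq (h : Config n q → ℝ) :
    blockKernel ν J P *ᵥ h = (#J : ℝ)⁻¹ • ∑ i ∈ J, pinKernel ν (P i) *ᵥ h := by
  rw [blockKernel, smul_mulVec, sum_mulVec]

lemma wInner_blockKernel_mulVec (w u v : Config n q → ℝ) :
    wInner w u (blockKernel ν J P *ᵥ v)
      = (#J : ℝ)⁻¹ * ∑ i ∈ J, wInner w u (pinKernel ν (P i) *ᵥ v) := by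
  simp only [blockKernel_mulVec_eq, wInner, Pi.smul_apply, Finset.sum_apply, smul_eq_mul,
    Finset.mul_sum]
  rw [Finset.sum_comm]
  exact Finset.sum_congr rfl fun _ _ => Finset.sum_congr rfl fun _ _ => by ring

lemma isReversible_blockKernel (hP₀ : ∀ i ∈ J, P₀ ⊆ P i) (σ₀ : Config n q) :
    IsReversible (restrictDist ν P₀ σ₀) (blockKernel ν J P) := by
  intro x y
  simp only [blockKernel, Matrix.smul_apply, Matrix.sum_apply, smul_eq_mul, Finset.mul_sum]
  exact Finset.sum_congr rfl fun i hi => by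
    linear_combination (#J : ℝ)⁻¹ * isReversible_pinKernel (m := ν) (hP₀ i hi) σ₀ x y

/-- A change at `v₀ ∉ P₀` is seen only by the blocks with `v₀ ∈ P i`, of which there is at most
one, and coupling independence bounds its effect there by `M` times the Lipschitz constant. -/
lemma IsHamLipschitz.blockKernel_mulVec (hh : IsHamLipschitz ρ P₀ L h)
    (hCI : CoupIndepOn ν VL ρ M) (hM : 0 ≤ M) (hL : 0 ≤ L) (hPVL : ∀ i ∈ J, P i ⊆ VL)
    (hP₀ : ∀ i ∈ J, P₀ ⊆ P i) (hdisj : (J : Set ι).PairwiseDisjoint fun i => P i \ P₀) :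
    IsHamLipschitz ρ P₀ (M / #J * L) (blockKernel ν J P *ᵥ h) := by
  refine isHamLipschitz_of_update fun x v₀ c hv₀ => ?_
  set d : ι → ℝ := fun i =>
    (pinKernel ν (P i) *ᵥ h) x - (pinKernel ν (P i) *ᵥ h) (Function.update x v₀ c)
  set S := J.filter fun i => v₀ ∈ P i
  have hS : #S ≤ 1 := Finset.card_le_one.2 fun i hi j hj => by
    rw [Finset.mem_filter] at hi hj
    exact hdisj.elim hi.1 hj.1 (Finset.not_disjoint_iff.2
      ⟨v₀, Finset.mem_sdiff.2 ⟨hi.2, hv₀⟩, Finset.mem_sdiff.2 ⟨hj.2, hv₀⟩⟩)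
  have hdiff : (blockKernel ν J P *ᵥ h) x - (blockKernel ν J P *ᵥ h) (Function.update x v₀ c)
      = (#J : ℝ)⁻¹ * ∑ i ∈ S, d i := by
    rw [Finset.sum_filter_of_ne fun i _ hi => by_contra fun hv => hi <| by
      simp [d, pinKernel_mulVec_update_of_notMem hv]]
    rw [blockKernel_mulVec_eq]
    simp [d, Finset.sum_apply, mul_sub, Finset.sum_sub_distrib]
  have hB : 0 ≤ M * L * ρ v₀ := by positivity
  calc _ = (#J : ℝ)⁻¹ * |∑ i ∈ S, d i| := by rw [hdiff, abs_mul, abs_inv, Nat.abs_cast]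
    _ ≤ (#J : ℝ)⁻¹ * (#S * (M * L * ρ v₀)) := by
        refine mul_le_mul_of_nonneg_left ?_ (by positivity)
        refine (Finset.abs_sum_le_sum_abs _ _).trans ?_
        rw [← nsmul_eq_mul]
        exact Finset.sum_le_card_nsmul _ _ _ fun i hi =>
          abs_pinKernel_mulVec_sub_update_le hCI hM hL (hPVL i (Finset.mem_filter.1 hi).1)
            (hP₀ i (Finset.mem_filter.1 hi).1) hh x hv₀ c
    _ ≤ (#J : ℝ)⁻¹ * (M * L * ρ v₀) :=
        mul_le_mul_of_nonneg_left (mul_le_of_le_one_left hB (by exact_mod_cast hS))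
          (by positivity)
    _ = M / #J * L * ρ v₀ := by ring

end BlockKernel

section Gap

variable {ν : Config n q → ℝ} {VL P₀ : Finset (Fin n)} {ρ : Fin n → ℕ} {M : ℕ} {ι : Type*}
  {J : Finset ι} {P : ι → Finset (Fin n)}

lemma wInner_le_of_isHamLipschitz {w h u : Config n q → ℝ} {σ₀ : Config n q} {L : ℝ}
    (hw : ∀ x, 0 ≤ w x) (hsupp : ∀ x, w x ≠ 0 → ∀ v ∈ P₀, x v = σ₀ v)
    (hmean : ∑ x, w x * h x = 0) (hu : IsHamLipschitz ρ P₀ L u) (hL : 0 ≤ L) :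
    wInner w h u ≤ (∑ x, w x * |h x|) * (L * ∑ v, (ρ v : ℝ)) := by
  have hcenter : wInner w h u = ∑ x, w x * (h x * (u x - u σ₀)) := by
    have : ∑ x, w x * (h x * (u x - u σ₀)) = wInner w h u - (∑ x, w x * h x) * u σ₀ := by
      simp only [wInner, Finset.sum_mul, ← Finset.sum_sub_distrib]
      exact Finset.sum_congr rfl fun x _ => by ring
    rw [this, hmean, zero_mul, sub_zero]
  rw [hcenter, Finset.sum_mul]
  refine Finset.sum_le_sum fun x _ => ?_
  rcases eq_or_ne (w x) 0 with h0 | h0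
  · simp [h0]
  rw [mul_assoc]
  refine mul_le_mul_of_nonneg_left ?_ (hw x)
  calc h x * (u x - u σ₀) ≤ |h x| * |u x - u σ₀| := by rw [← abs_mul]; exact le_abs_self _
    _ ≤ |h x| * (L * ∑ v, (ρ v : ℝ)) :=
      mul_le_mul_of_nonneg_left ((hu x σ₀ (hsupp x h0)).trans
        (mul_le_mul_of_nonneg_left (hamW_le_sum ρ x σ₀) hL)) (abs_nonneg _)

variable (hν0 : ∀ x, 0 ≤ ν x) (hpos : ∀ P ⊆ VL, ∀ x, 0 < pinMass ν P x) (hρ : ∀ v, 0 < ρ v)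
  (hCI : CoupIndepOn ν VL ρ M) (hJ : 2 * M ≤ #J) (hPVL : ∀ i ∈ J, P i ⊆ VL)
  (hP₀ : ∀ i ∈ J, P₀ ⊆ P i) (hdisj : (J : Set ι).PairwiseDisjoint fun i => P i \ P₀)
include hν0 hpos hρ hCI hJ hPVL hP₀ hdisj

lemma wInner_blockKernel_mulVec_le_half (σ₀ : Config n q) {h : Config n q → ℝ}
    (hmean : ∑ x, restrictDist ν P₀ σ₀ x * h x = 0) :
    wInner (restrictDist ν P₀ σ₀) h (blockKernel ν J P *ᵥ h)
      ≤ 1 / 2 * wInner (restrictDist ν P₀ σ₀) h h := by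
  set w := restrictDist ν P₀ σ₀
  set K := blockKernel ν J P
  have hw : ∀ x, 0 ≤ w x := restrictDist_nonneg hν0 σ₀
  have hpsd : ∀ u, 0 ≤ wInner w u (K *ᵥ u) := fun u => by
    rw [wInner_blockKernel_mulVec]
    exact mul_nonneg (by positivity) (Finset.sum_nonneg fun i hi =>
      (isReversible_pinKernel (hP₀ i hi) σ₀).wInner_mulVec_self_nonneg hw
        (pinKernel_mul_self fun x => hpos _ (hPVL i hi) x) u)
  have hγ : (M : ℝ) / #J ≤ 1 / 2 := by
    rcases Nat.eq_zero_or_pos #J with hJ0 | hJpos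
    · simp [hJ0]
    · rw [div_le_iff₀ (by exact_mod_cast hJpos)]
      have : (2 * M : ℝ) ≤ #J := by exact_mod_cast hJ
      linarith
  set L₀ := 2 * ∑ x, |h x|
  have hlip : ∀ t, IsHamLipschitz ρ P₀ ((1 / 2) ^ t * L₀) ((K ^ t) *ᵥ h) := by
    intro t
    induction t with
    | zero => simpa using isHamLipschitz_of_pos hρ P₀ h
    | succ t ih =>
      rw [pow_succ' K, ← mulVec_mulVec]
      refine (ih.blockKernel_mulVec hCI (Nat.cast_nonneg M) (by positivity) hPVL hP₀ hdisj).mono ?_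
      rw [pow_succ', mul_assoc]
      exact mul_le_mul_of_nonneg_right hγ (by positivity)
  refine (isReversible_blockKernel hP₀ σ₀).wInner_mulVec_le_of_le_geom hw hpsd
    (C := (∑ x, w x * |h x|) * (L₀ * ∑ v, (ρ v : ℝ))) (by norm_num) fun t => ?_
  refine (wInner_le_of_isHamLipschitz hw (fun x hx => eq_on_of_restrictDist_ne_zero hx) hmean
    (hlip t) (by positivity)).trans_eq ?_
  ring

theorem varD_restrictDist_le_of_blocks (hJne : J.Nonempty) (σ₀ : Config n q)
    (g : Config n q → ℝ) :
    varD (restrictDist ν P₀ σ₀) g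
      ≤ 2 / #J * ∑ i ∈ J, ∑ x, restrictDist ν P₀ σ₀ x * varD (restrictDist ν (P i) x) g := by
  obtain ⟨i₀, hi₀⟩ := hJne
  set w := restrictDist ν P₀ σ₀
  have hw1 : ∑ x, w x = 1 := sum_restrictDist (hpos P₀ ((hP₀ i₀ hi₀).trans (hPVL i₀ hi₀)) σ₀)
  set e := expVal w g
  set h : Config n q → ℝ := fun a => g a - e
  have hmean : ∑ x, w x * h x = 0 := by
    simp [h, e, mul_sub, Finset.sum_sub_distrib, ← Finset.sum_mul, hw1, expVal]
  have hvar : varD w g = wInner w h h := by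
    simp only [varD, wInner, h, sq]
    rfl
  have hblock : ∀ i ∈ J, ∑ x, w x * varD (restrictDist ν (P i) x) g
      = wInner w h h - wInner w h (pinKernel ν (P i) *ᵥ h) := by
    intro i hi
    have hposi : ∀ x, 0 < pinMass ν (P i) x := hpos _ (hPVL i hi)
    refine (Finset.sum_congr rfl fun x _ => ?_).trans
      ((isReversible_pinKernel (hP₀ i hi) σ₀).sum_mul_varD (fun x => sum_pinKernel_row (hposi x))
        (pinKernel_mul_self hposi) h)
    show _ = w x * varD (restrictDist ν (P i) x) fun a => g a - e
    rw [varD_sub_const (sum_restrictDist (hposi x))]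
  have hhalf := wInner_blockKernel_mulVec_le_half hν0 hpos hρ hCI hJ hPVL hP₀ hdisj σ₀ hmean
  rw [wInner_blockKernel_mulVec] at hhalf
  have hJpos : (0 : ℝ) < #J := by exact_mod_cast Finset.card_pos.2 ⟨i₀, hi₀⟩
  rw [Finset.sum_congr rfl hblock, Finset.sum_sub_distrib, Finset.sum_const, nsmul_eq_mul, hvar]
  calc wInner w h h
      ≤ 2 * wInner w h h - 2 * ((#J : ℝ)⁻¹ * ∑ i ∈ J, wInner w h (pinKernel ν (P i) *ᵥ h)) := by
        linarith
    _ = 2 / #J * (#J * wInner w h h - ∑ i ∈ J, wInner w h (pinKernel ν (P i) *ᵥ h)) := by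
        field_simp

theorem pinVar_le_of_blocks (hν1 : ∑ x, ν x = 1) (hJne : J.Nonempty) (g : Config n q → ℝ) :
    pinVar ν P₀ g ≤ 2 / #J * ∑ i ∈ J, pinVar ν (P i) g := by
  obtain ⟨i₀, hi₀⟩ := hJne
  have hposP₀ : ∀ x, 0 < pinMass ν P₀ x := hpos P₀ ((hP₀ i₀ hi₀).trans (hPVL i₀ hi₀))
  have hstat : ∀ V : Config n q → ℝ,
      ∑ σ, ν σ * ∑ x, restrictDist ν P₀ σ x * V x = ∑ x, ν x * V x :=
    (isReversible_pinKernel_self hν1).sum_mul_mulVec fun x => sum_pinKernel_row (hposP₀ x)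
  calc pinVar ν P₀ g
      ≤ ∑ σ, ν σ * (2 / #J * ∑ i ∈ J, ∑ x,
          restrictDist ν P₀ σ x * varD (restrictDist ν (P i) x) g) :=
        Finset.sum_le_sum fun σ _ => mul_le_mul_of_nonneg_left
          (varD_restrictDist_le_of_blocks hν0 hpos hρ hCI hJ hPVL hP₀ hdisj ⟨i₀, hi₀⟩ σ g) (hν0 σ)
    _ = 2 / #J * ∑ i ∈ J, ∑ σ, ν σ * ∑ x,
          restrictDist ν P₀ σ x * varD (restrictDist ν (P i) x) g := by
        simp only [Finset.mul_sum]
        rw [Finset.sum_comm]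
        exact Finset.sum_congr rfl fun _ _ => Finset.sum_congr rfl fun _ _ =>
          Finset.sum_congr rfl fun _ _ => by ring
    _ = 2 / #J * ∑ i ∈ J, pinVar ν (P i) g := by simp only [pinVar, hstat]

end Gap

section Blocks

lemma sum_sum_powersetCard_erase {α : Type*} [DecidableEq α] (J : Finset α) (t : ℕ)
    (f : Finset α → ℝ) :
    ∑ i ∈ J, ∑ R ∈ (J.erase i).powersetCard t, f R
      = ∑ R ∈ J.powersetCard t, ((#J - t : ℕ) : ℝ) * f R := by
  have hfilter : ∀ i ∈ J, (J.erase i).powersetCard t = (J.powersetCard t).filter (i ∉ ·) := by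
    intro i _
    ext R
    simp only [Finset.mem_powersetCard, Finset.mem_filter, Finset.subset_erase]
    tauto
  calc ∑ i ∈ J, ∑ R ∈ (J.erase i).powersetCard t, f R
      = ∑ R ∈ J.powersetCard t, ∑ i ∈ J, if i ∉ R then f R else 0 := by
        rw [Finset.sum_congr rfl fun i hi => by rw [hfilter i hi, Finset.sum_filter]]
        exact Finset.sum_comm
    _ = ∑ R ∈ J.powersetCard t, ((#J - t : ℕ) : ℝ) * f R := by
        refine Finset.sum_congr rfl fun R hR => ?_
        obtain ⟨hRJ, hR⟩ := Finset.mem_powersetCard.1 hR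
        rw [← Finset.sum_filter, Finset.sum_const, nsmul_eq_mul, Finset.filter_not,
          Finset.filter_mem_eq_inter, Finset.inter_eq_right.2 hRJ,
          Finset.card_sdiff_of_subset hRJ, hR]

lemma two_div_mul_choose_eq {j t : ℕ} (ht : t ≤ j) :
    2 / (j + 1 : ℝ) * (2 ^ (j - t) / j.choose t) * ((j + 1 - t : ℕ) : ℝ)
      = 2 ^ (j + 1 - t) / (j + 1).choose t := by
  have key : (j.choose t * (j + 1) : ℝ) = (j + 1).choose t * ((j + 1 - t : ℕ) : ℝ) := by
    exact_mod_cast Nat.choose_mul_succ_eq j t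
  have h1 : (0 : ℝ) < j.choose t := by exact_mod_cast Nat.choose_pos ht
  have h2 : (0 : ℝ) < (j + 1).choose t := by exact_mod_cast Nat.choose_pos (by omega)
  rw [show (2 : ℝ) ^ (j + 1 - t) = 2 ^ (j - t) * 2 by rw [← pow_succ]; congr 1; omega]
  field_simp
  linear_combination -key

lemma sdiff_unionBlocks_subset_erase (VL : Finset (Fin n)) (U : Fin k → Finset (Fin n))
    (J : Finset (Fin k)) (i : Fin k) :
    VL \ unionBlocks U J ⊆ VL \ unionBlocks U (J.erase i) :=
  Finset.sdiff_subset_sdiff subset_rfl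
    (Finset.biUnion_subset_biUnion_of_subset_left U (Finset.erase_subset i J))

lemma pairwiseDisjoint_sdiff_unionBlocks_erase (VL : Finset (Fin n))
    (U : Fin k → Finset (Fin n)) (J : Finset (Fin k)) :
    (J : Set (Fin k)).PairwiseDisjoint
      fun i => (VL \ unionBlocks U (J.erase i)) \ (VL \ unionBlocks U J) := by
  intro i hi j hj hij
  rw [Function.onFun, Finset.disjoint_left]
  intro v hvi hvj
  simp only [unionBlocks, Finset.mem_sdiff, Finset.mem_biUnion, Finset.mem_erase] at hvi hvj
  grind

variable {ν : Config n q → ℝ} {VL : Finset (Fin n)} {ρ : Fin n → ℕ} {M : ℕ}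

theorem pinVar_le_sum_powersetCard (hν0 : ∀ x, 0 ≤ ν x) (hν1 : ∑ x, ν x = 1)
    (hpos : ∀ P ⊆ VL, ∀ x, 0 < pinMass ν P x) (hρ : ∀ v, 0 < ρ v) (hCI : CoupIndepOn ν VL ρ M)
    (U : Fin k → Finset (Fin n)) (J : Finset (Fin k)) (hJ : 2 * M ≤ #J) (g : Config n q → ℝ) :
    pinVar ν (VL \ unionBlocks U J) g ≤ 2 ^ (#J - 2 * M) / (#J).choose (2 * M)
      * ∑ R ∈ J.powersetCard (2 * M), pinVar ν (VL \ unionBlocks U R) g := by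
  induction J using Finset.strongInduction with
  | H J ih =>
  rcases hJ.eq_or_lt with hJeq | hJlt
  · rw [hJeq]
    simp [Finset.powersetCard_self]
  obtain ⟨j, hj⟩ : ∃ j, #J = j + 1 := ⟨#J - 1, by omega⟩
  have hih : ∀ i ∈ J, pinVar ν (VL \ unionBlocks U (J.erase i)) g
      ≤ 2 ^ (j - 2 * M) / j.choose (2 * M)
        * ∑ R ∈ (J.erase i).powersetCard (2 * M), pinVar ν (VL \ unionBlocks U R) g := by
    intro i hi
    have hcard : #(J.erase i) = j := by rw [Finset.card_erase_of_mem hi, hj, Nat.add_sub_cancel]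
    simpa [hcard] using ih _ (Finset.erase_ssubset hi) (by omega)
  calc pinVar ν (VL \ unionBlocks U J) g
      ≤ 2 / #J * ∑ i ∈ J, pinVar ν (VL \ unionBlocks U (J.erase i)) g :=
        pinVar_le_of_blocks hν0 hpos hρ hCI hJlt.le (fun i _ => Finset.sdiff_subset)
          (fun i _ => sdiff_unionBlocks_subset_erase VL U J i)
          (pairwiseDisjoint_sdiff_unionBlocks_erase VL U J) hν1 (Finset.card_pos.1 (by omega)) g
    _ ≤ 2 / #J * ∑ i ∈ J, 2 ^ (j - 2 * M) / j.choose (2 * M)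
          * ∑ R ∈ (J.erase i).powersetCard (2 * M), pinVar ν (VL \ unionBlocks U R) g := by
        gcongr with i hi
        exact hih i hi
    _ = 2 / (j + 1 : ℝ) * (2 ^ (j - 2 * M) / j.choose (2 * M)) * ((j + 1 - 2 * M : ℕ) : ℝ)
          * ∑ R ∈ J.powersetCard (2 * M), pinVar ν (VL \ unionBlocks U R) g := by
        rw [← Finset.mul_sum, sum_sum_powersetCard_erase, ← Finset.mul_sum, hj]
        push_cast
        ring
    _ = _ := by rw [two_div_mul_choose_eq (by omega), hj]

end Blocks

section Marginal

variable {μ : Config n 2 → ℝ} {W P : Finset (Fin n)}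

lemma sum_marginalOn_mul (μ : Config n 2 → ℝ) {F : Config n 2 → ℝ}
    (hF : DependsOn F (W : Set (Fin n))) :
    ∑ x, marginalOn μ W x * F x = ∑ x, μ x * F x := by
  set r : Config n 2 → Config n 2 := fun a v => if v ∈ W then a v else 0
  have hfiber : ∀ x a, ((∀ v, v ∉ W → x v = 0) ∧ ∀ v ∈ W, a v = x v) ↔ x = r a := by
    refine fun x a => ⟨fun ⟨h0, hW⟩ => funext fun v => ?_, ?_⟩
    · by_cases hv : v ∈ W <;> simp [r, hv, h0 v, hW v]
    · rintro rfl
      exact ⟨fun v hv => if_neg hv, fun v hv => (if_pos hv).symm⟩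
  have hx : ∀ x, marginalOn μ W x * F x = ∑ a, if x = r a then μ a * F a else 0 := by
    intro x
    rw [marginalOn]
    split_ifs with hZ
    · rw [Finset.sum_filter, Finset.sum_mul]
      refine Finset.sum_congr rfl fun a _ => ?_
      by_cases ha : ∀ v ∈ W, a v = x v
      · rw [if_pos ha, if_pos ((hfiber x a).1 ⟨hZ, ha⟩), hF ha]
      · rw [if_neg ha, if_neg fun h => ha ((hfiber x a).2 h).2, zero_mul]
    · exact (zero_mul _).trans
        (Finset.sum_eq_zero fun a _ => if_neg fun h => hZ ((hfiber x a).2 h).1).symm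
  simp only [hx]
  rw [Finset.sum_comm]
  simp

lemma pinMass_eq_sum (m : Config n q → ℝ) (P : Finset (Fin n)) (x : Config n q) :
    pinMass m P x = ∑ a, m a * if ∀ v ∈ P, a v = x v then 1 else 0 := by
  simp [pinMass, Finset.sum_filter]

lemma expVal_restrictDist_eq (m : Config n q → ℝ) (P : Finset (Fin n)) (x : Config n q)
    (F : Config n q → ℝ) :
    expVal (restrictDist m P x) F
      = (∑ a, m a * if ∀ v ∈ P, a v = x v then F a else 0) / pinMass m P x := by
  simp only [expVal, restrictDist_eq_div, Finset.sum_div]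
  exact Finset.sum_congr rfl fun a _ => by split_ifs <;> ring

lemma dependsOn_ite_eq_on (hP : P ⊆ W) {F : Config n 2 → ℝ} (hF : DependsOn F (W : Set (Fin n)))
    (x : Config n 2) :
    DependsOn (fun a => if ∀ v ∈ P, a v = x v then F a else 0) (W : Set (Fin n)) := by
  intro a b hab
  have hiff : (∀ v ∈ P, a v = x v) ↔ ∀ v ∈ P, b v = x v :=
    forall₂_congr fun v hv => by rw [hab v (hP hv)]
  simp only [hiff, hF hab]

lemma pinMass_marginalOn (hP : P ⊆ W) (x : Config n 2) :
    pinMass (marginalOn μ W) P x = pinMass μ P x := by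
  rw [pinMass_eq_sum, pinMass_eq_sum,
    sum_marginalOn_mul μ (dependsOn_ite_eq_on hP (F := fun _ => 1) (fun _ _ _ => rfl) x)]

lemma expVal_restrictDist_marginalOn (hP : P ⊆ W) {F : Config n 2 → ℝ}
    (hF : DependsOn F (W : Set (Fin n))) (x : Config n 2) :
    expVal (restrictDist (marginalOn μ W) P x) F = expVal (restrictDist μ P x) F := by
  rw [expVal_restrictDist_eq, expVal_restrictDist_eq, pinMass_marginalOn hP,
    sum_marginalOn_mul μ (dependsOn_ite_eq_on hP hF x)]

lemma pinVar_marginalOn (hP : P ⊆ W) {F : Config n 2 → ℝ} (hF : DependsOn F (W : Set (Fin n))) :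
    pinVar (marginalOn μ W) P F = pinVar μ P F := by
  have hvar : ∀ σ, varD (restrictDist (marginalOn μ W) P σ) F = varD (restrictDist μ P σ) F := by
    intro σ
    rw [varD, expVal_restrictDist_marginalOn hP hF,
      expVal_restrictDist_marginalOn hP (fun a b hab => by simp only [hF hab])]
    rfl
  simp only [pinVar, hvar]
  exact sum_marginalOn_mul μ fun a b hab => by
    rw [restrictDist_congr fun v hv => hab v (hP hv)]

lemma marginalOn_nonneg (hμ : ∀ x, 0 ≤ μ x) (x : Config n 2) : 0 ≤ marginalOn μ W x := by
  rw [marginalOn]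
  split_ifs
  exacts [Finset.sum_nonneg fun a _ => hμ a, le_rfl]

lemma sum_marginalOn : ∑ x, marginalOn μ W x = ∑ x, μ x := by
  simpa using sum_marginalOn_mul μ (W := W) (F := fun _ => 1) fun _ _ _ => rfl

theorem varD_le_sum_pinVar_unionBlocks {VL : Finset (Fin n)} {ρ : Fin n → ℕ} {M : ℕ}
    (hμ0 : ∀ x, 0 ≤ μ x) (hμ1 : ∑ x, μ x = 1) (hpos : ∀ P ⊆ VL, ∀ x, 0 < pinMass μ P x)
    (hρ : ∀ v, 0 < ρ v) (hCI : CoupIndepOn (marginalOn μ VL) VL ρ M)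
    (U : Fin k → Finset (Fin n)) (hcover : VL ⊆ unionBlocks U univ) (hk : 2 * M ≤ k)
    (f : Config n 2 → ℝ) :
    varD μ f ≤ 2 ^ (k - 2 * M) / k.choose (2 * M)
      * ∑ R ∈ (univ : Finset (Fin k)).powersetCard (2 * M), pinVar μ (VL \ unionBlocks U R) f := by
  set ν := marginalOn μ VL
  set F := pinKernel μ VL *ᵥ f
  set T := pinVar μ VL f
  have hF : DependsOn F (VL : Set (Fin n)) := fun a b hab =>
    congrArg (expVal · f) (restrictDist_congr hab)
  have hsplit : ∀ P ⊆ VL, pinVar μ P f = T + pinVar ν P F := fun P hP => by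
    rw [pinVar_eq_pinVar_add_pinVar hμ1 hP (hpos P hP) (hpos VL subset_rfl),
      pinVar_marginalOn hP hF]
  have hposν : ∀ P ⊆ VL, ∀ x, 0 < pinMass ν P x := fun P hP x => by
    rw [pinMass_marginalOn hP]
    exact hpos P hP x
  have hblocks := pinVar_le_sum_powersetCard (marginalOn_nonneg hμ0)
    (sum_marginalOn.trans hμ1) hposν hρ hCI U univ (by simpa using hk) F
  rw [Finset.card_univ, Fintype.card_fin, Finset.sdiff_eq_empty_iff_subset.2 hcover] at hblocks
  have hchoose : (0 : ℝ) < k.choose (2 * M) := by exact_mod_cast Nat.choose_pos hk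
  have hc : 1 ≤ 2 ^ (k - 2 * M) / k.choose (2 * M) * (k.choose (2 * M) : ℝ) := by
    rw [div_mul_cancel₀ _ hchoose.ne']
    exact one_le_pow₀ (by norm_num)
  calc varD μ f = T + pinVar ν ∅ F := by rw [← pinVar_empty hμ1, hsplit ∅ (Finset.empty_subset _)]
    _ ≤ 2 ^ (k - 2 * M) / k.choose (2 * M) * k.choose (2 * M) * T
        + 2 ^ (k - 2 * M) / k.choose (2 * M)
          * ∑ R ∈ (univ : Finset (Fin k)).powersetCard (2 * M), pinVar ν (VL \ unionBlocks U R) F :=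
        add_le_add (le_mul_of_one_le_left (pinVar_nonneg hμ0 _ _) hc) hblocks
    _ = _ := by
        rw [Finset.sum_congr rfl fun R _ => hsplit _ Finset.sdiff_subset, Finset.sum_add_distrib,
          Finset.sum_const, Finset.card_powersetCard, Finset.card_univ, Fintype.card_fin,
          nsmul_eq_mul]
        ring

end Marginal

section Hardcore

variable {G : SimpleGraph (Fin n)} {VL P : Finset (Fin n)} {lam : ℝ}

lemma hcWeight_nonneg (hlam : 0 ≤ lam) (σ : Config n 2) : 0 ≤ hcWeight G lam σ := by
  unfold hcWeight
  split_ifs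
  exacts [pow_nonneg hlam _, le_rfl]

lemma hcWeight_pos (hbip : Bipartite G VL) (hlam : 0 < lam) {σ : Config n 2}
    (hσ : ∀ v, σ v = 1 → v ∈ VL) : 0 < hcWeight G lam σ := by
  rw [hcWeight, if_pos fun u v huv h => (hbip u v huv).1 (hσ u h.1) (hσ v h.2)]
  positivity

lemma sum_hcWeight_pos (hlam : 0 ≤ lam) : 0 < ∑ σ : Config n 2, hcWeight G lam σ :=
  Finset.sum_pos' (fun σ _ => hcWeight_nonneg hlam σ) ⟨0, Finset.mem_univ _, by simp [hcWeight]⟩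

lemma hardcoreDist_nonneg (hlam : 0 ≤ lam) (σ : Config n 2) : 0 ≤ hardcoreDist G lam σ :=
  div_nonneg (hcWeight_nonneg hlam σ) (sum_hcWeight_pos hlam).le

lemma sum_hardcoreDist (hlam : 0 ≤ lam) : ∑ σ, hardcoreDist G lam σ = 1 := by
  simp only [hardcoreDist, ← Finset.sum_div]
  exact div_self (sum_hcWeight_pos hlam).ne'

lemma pinMass_hardcoreDist_pos (hbip : Bipartite G VL) (hlam : 0 < lam) (hP : P ⊆ VL)
    (x : Config n 2) : 0 < pinMass (hardcoreDist G lam) P x := by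
  refine Finset.sum_pos' (fun a _ => hardcoreDist_nonneg hlam.le a)
    ⟨fun v => if v ∈ P then x v else 0, by simp +contextual, ?_⟩
  refine div_pos (hcWeight_pos hbip hlam fun v hv => hP ?_) (sum_hcWeight_pos hlam.le)
  by_contra hvP
  simp [hvP] at hv

end Hardcore

theorem statement15_general {n : ℕ} (G : SimpleGraph (Fin n)) (VL : Finset (Fin n))
    (lam : ℝ) (hbip : Bipartite G VL) (hlam : 0 < lam)
    (M k : ℕ) (hk : 2 * M ≤ k)
    (hCI : ∃ ρ : Fin n → ℕ, (∀ v, 0 < ρ v) ∧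
      ∀ (P : Finset (Fin n)), P ⊆ VL → ∀ v₀ ∈ P,
      ∀ σ₁ σ₂ : Config n 2, σ₁ v₀ ≠ σ₂ v₀ →
        (∀ v ∈ P, v ≠ v₀ → σ₁ v = σ₂ v) →
        ∃ π, IsCoupling
            (restrictDist (marginalOn (hardcoreDist G lam) VL) P σ₁)
            (restrictDist (marginalOn (hardcoreDist G lam) VL) P σ₂) π ∧
          expHam π ρ ≤ (M : ℝ) * (ρ v₀ : ℝ))
    (U : Fin k → Finset (Fin n))
    (hcover : ∀ v : Fin n, v ∈ VL ↔ ∃ i, v ∈ U i) :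
    ∀ f : Config n 2 → ℝ,
      varD (hardcoreDist G lam) f ≤
        (2 : ℝ) ^ (k - 2 * M) / (k.choose (2 * M) : ℝ) *
          ∑ R ∈ (univ : Finset (Fin k)).powersetCard (2 * M),
            avgCondVar (hardcoreDist G lam) (unionBlocks U R ∪ VLᶜ) f := by
  intro f
  obtain ⟨ρ, hρ, hCI⟩ := hCI
  have hcover' : VL ⊆ unionBlocks U univ := fun v hv => by
    obtain ⟨i, hi⟩ := (hcover v).1 hv
    exact Finset.mem_biUnion.2 ⟨i, Finset.mem_univ i, hi⟩
  have hcompl : ∀ R, (unionBlocks U R ∪ VLᶜ)ᶜ = VL \ unionBlocks U R := fun R => by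
    ext v
    simp [and_comm]
  calc varD (hardcoreDist G lam) f ≤ _ :=
      varD_le_sum_pinVar_unionBlocks (hardcoreDist_nonneg hlam.le) (sum_hardcoreDist hlam.le)
        (fun P hP => pinMass_hardcoreDist_pos hbip hlam hP) hρ hCI U hcover' hk f
    _ = _ := by simp only [avgCondVar, pinVar, hcompl]

/-- Lemma 8.5: relaxation of the block dynamics `B` for the
bipartite hardcore model.  If the left marginal `μ_L` is `M`-coupling
independent and `V_L = U_1 ⊎ ⋯ ⊎ U_k` with `k ≥ 2M`, then the block dynamics
which resamples `U_S ∪ V_R` for a uniformly random `S ⊆ [k]` of size `2M` has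
relaxation time at most `2^(k−2M)`, i.e. for every `f`,
`Var_μ[f] ≤ (2^(k−2M)/C(k,2M)) · Σ_{|S|=2M} μ[Var_{U_S ∪ V_R}[f]]`. -/
theorem statement15 {n : ℕ} (G : SimpleGraph (Fin n)) (VL : Finset (Fin n))
    (lam : ℝ) (hbip : Bipartite G VL) (hlam : 0 < lam)
    (M k : ℕ) (hM : 1 ≤ M) (hk : 2 * M ≤ k)
    (hCI : ∃ ρ : Fin n → ℕ, (∀ v, 0 < ρ v) ∧
      ∀ (P : Finset (Fin n)), P ⊆ VL → ∀ v₀ ∈ P,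
      ∀ σ₁ σ₂ : Config n 2, σ₁ v₀ ≠ σ₂ v₀ →
        (∀ v ∈ P, v ≠ v₀ → σ₁ v = σ₂ v) →
        ∃ π, IsCoupling
            (restrictDist (marginalOn (hardcoreDist G lam) VL) P σ₁)
            (restrictDist (marginalOn (hardcoreDist G lam) VL) P σ₂) π ∧
          expHam π ρ ≤ (M : ℝ) * (ρ v₀ : ℝ))
    (U : Fin k → Finset (Fin n))
    (hdisj : ∀ i j, i ≠ j → Disjoint (U i) (U j))
    (hcover : ∀ v : Fin n, v ∈ VL ↔ ∃ i, v ∈ U i) :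
    ∀ f : Config n 2 → ℝ,
      varD (hardcoreDist G lam) f ≤
        (2 : ℝ) ^ (k - 2 * M) / (k.choose (2 * M) : ℝ) *
          ∑ R ∈ (univ : Finset (Fin k)).powersetCard (2 * M),
            avgCondVar (hardcoreDist G lam) (unionBlocks U R ∪ VLᶜ) f :=
  statement15_general G VL lam hbip hlam M k hk hCI U hcover

end Paper
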